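/- Let σ and τ be sign sequences with τ ⪯ σ (τ is a subsequence of σ such that the prefix of σ before the first selected index, and each block of σ strictly between consecutive selected indices, contains an even number of zeros). If the numbers of zeros of σ and τ have the same parity and τ is good, then σ is good. If the parities differ and τ is reversing, then σ is good. -/

import Mathlib

/-- A pattern: a cyclically ordered partition of the four colours (here
`Fin 4`) into a pair and two singletons, recorded canonically as the pair
followed by the two singletons `{x}`, `{y}` in cyclic order. -/
structure Pattern where
  pair : Finset (Fin 4)
  x : Fin 4
  y : Fin 4
  pair_card : pair.card = 2
  x_not_mem : x ∉ pair
  y_not_mem : y ∉ pair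
  x_ne_y : x ≠ y
deriving DecidableEq

/-- `ρ` is `+`-compatible with `π`: either `ρ = π`, or `ρ` is obtained from `π`
by moving one of the paired colours to the preceding part (in cyclic order). -/
def PlusCompat (π ρ : Pattern) : Prop :=
  ρ = π ∨ ∃ u ∈ π.pair, ∃ v ∈ π.pair, u ≠ v ∧
    ρ.pair = {π.y, u} ∧ ρ.x = v ∧ ρ.y = π.x

/-- `π` and `ρ` are `0`-compatible: the pair of `ρ` consists of the two colours
unpaired in `π`, and vice versa (this relation is symmetric; these are the
undirected edges of the auxiliary graph `D`). -/
def ZeroCompat (π ρ : Pattern) : Prop :=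
  ρ.pair = {π.x, π.y} ∧ π.pair = {ρ.x, ρ.y}

/-- `IsStroll σ π τ`: there is a `σ`-stroll in the auxiliary graph `D` from the
pattern `π` to the pattern `τ`.  Signs are elements of `ZMod 3`, with `1`
standing for `+` and `2` for `−`. -/
inductive IsStroll : List (ZMod 3) → Pattern → Pattern → Prop
  | nil (π : Pattern) : IsStroll [] π π
  | zero {σ : List (ZMod 3)} {π ρ τ : Pattern} :
      ZeroCompat π ρ → IsStroll σ ρ τ → IsStroll (0 :: σ) π τ
  | plus {σ : List (ZMod 3)} {π ρ τ : Pattern} :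
      PlusCompat π ρ → IsStroll σ ρ τ → IsStroll (1 :: σ) π τ
  | minus {σ : List (ZMod 3)} {π ρ τ : Pattern} :
      PlusCompat ρ π → IsStroll σ ρ τ → IsStroll (2 :: σ) π τ

/-- The pattern `({1,2},{3},{4})`. -/
def basePattern : Pattern :=
  ⟨{0, 1}, 2, 3, by decide, by decide, by decide, by decide⟩

/-- The pattern `({1,2},{4},{3})`. -/
def goodEnd : Pattern :=
  ⟨{0, 1}, 3, 2, by decide, by decide, by decide, by decide⟩

/-- The pattern `({3,4},{1},{2})`. -/
def reversingEnd : Pattern :=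
  ⟨{2, 3}, 0, 1, by decide, by decide, by decide, by decide⟩

/-- A sign sequence is good if some stroll runs from `({1,2},{3},{4})` to
`({1,2},{4},{3})`. -/
def GoodSeq (σ : List (ZMod 3)) : Prop := IsStroll σ basePattern goodEnd

/-- A sign sequence is reversing if some stroll runs from `({1,2},{3},{4})` to
`({3,4},{1},{2})`. -/
def ReversingSeq (σ : List (ZMod 3)) : Prop := IsStroll σ basePattern reversingEnd

/-- The order `τ ⪯ σ` on sign sequences: `τ` is a subsequence of `σ` such that
the block of `σ` before the first selected entry, and each block strictly
between consecutive selected entries, contains an even number of zeros. -/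
inductive Precedes : List (ZMod 3) → List (ZMod 3) → Prop
  | nil (σ : List (ZMod 3)) : Precedes [] σ
  | cons (g : List (ZMod 3)) (t : ZMod 3) (τ σ : List (ZMod 3)) :
      Even (g.count 0) → Precedes τ σ → Precedes (t :: τ) (g ++ t :: σ)

/-
Zero edges of `D` are symmetric and every pattern has one, while `+` and `−` edges
may stay in place. Hence a block with an even number of zeros closes a loop at any
pattern, and a block with an odd number of zeros walks along any zero edge. A stroll
for `τ` is turned into one for `σ` by inserting such loops for the blocks of `σ`
between selected entries; the leftover final block of `σ` ends the stroll at the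
same pattern or at a zero-neighbour according to the parity of the number of zeros,
and `({3,4},{1},{2})` is a zero-neighbour of `({1,2},{4},{3})`.
-/

lemma ZeroCompat.symm {π ρ : Pattern} (h : ZeroCompat π ρ) : ZeroCompat ρ π :=
  ⟨h.2, h.1⟩

lemma Pattern.exists_zeroCompat (π : Pattern) : ∃ ρ, ZeroCompat π ρ := by
  obtain ⟨a, b, hab, hp⟩ := Finset.card_eq_two.mp π.pair_card
  have not_mem_xy : ∀ c ∈ π.pair, c ∉ ({π.x, π.y} : Finset (Fin 4)) := by
    intro c hc
    simp only [Finset.mem_insert, Finset.mem_singleton]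
    rintro (rfl | rfl)
    exacts [π.x_not_mem hc, π.y_not_mem hc]
  exact ⟨⟨{π.x, π.y}, a, b, Finset.card_pair π.x_ne_y, not_mem_xy a (by simp [hp]),
    not_mem_xy b (by simp [hp]), hab⟩, rfl, hp⟩

def ZeroLink (n : ℕ) (π ρ : Pattern) : Prop :=
  if Even n then ρ = π else ZeroCompat π ρ

lemma zeroLink_congr {m n : ℕ} (h : Even m ↔ Even n) : ZeroLink m = ZeroLink n := by
  funext π ρ
  simp only [ZeroLink, h]

namespace IsStroll

lemma append {l₁ l₂ : List (ZMod 3)} {π ρ ω : Pattern}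
    (h₁ : IsStroll l₁ π ρ) (h₂ : IsStroll l₂ ρ ω) : IsStroll (l₁ ++ l₂) π ω := by
  induction h₁ with
  | nil _ => exact h₂
  | zero hc _ ih => exact .zero hc (ih h₂)
  | plus hc _ ih => exact .plus hc (ih h₂)
  | minus hc _ ih => exact .minus hc (ih h₂)

lemma cons_of_ne_zero {t : ZMod 3} (ht : t ≠ 0) {l : List (ZMod 3)} {π ρ : Pattern}
    (h : IsStroll l π ρ) : IsStroll (t :: l) π ρ := by
  obtain rfl | rfl : t = 1 ∨ t = 2 := by revert t; decide
  exacts [.plus (.inl rfl) h, .minus (.inl rfl) h]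

lemma of_zeroLink (l : List (ZMod 3)) {π ρ : Pattern} (h : ZeroLink (l.count 0) π ρ) :
    IsStroll l π ρ := by
  induction l generalizing π ρ with
  | nil =>
    obtain rfl : ρ = π := by simpa [ZeroLink] using h
    exact .nil ρ
  | cons t l ih =>
    by_cases ht : t = 0
    · subst ht
      simp only [ZeroLink, List.count_cons_self, Nat.even_add_one] at h ih
      by_cases hl : Even (l.count 0)
      · exact .zero (by simpa [hl] using h) (ih (by simp [hl]))
      · obtain rfl : ρ = π := by simpa [hl] using h
        obtain ⟨ρ', hρ'⟩ := ρ.exists_zeroCompat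
        exact .zero hρ' (ih (by simpa [hl] using hρ'.symm))
    · rw [List.count_cons_of_ne ht] at h
      exact cons_of_ne_zero ht (ih h)

lemma of_precedes {τ σ : List (ZMod 3)} (h : Precedes τ σ) {π ω ρ : Pattern}
    (hs : IsStroll τ π ω) (hl : ZeroLink (σ.count 0 + τ.count 0) ω ρ) :
    IsStroll σ π ρ := by
  induction h generalizing π with
  | nil σ =>
    cases hs
    exact of_zeroLink σ hl
  | cons g t τ σ hg _ ih =>
    have loop : IsStroll g π π := of_zeroLink g (by simp [ZeroLink, hg])
    have hl' : ZeroLink (σ.count 0 + τ.count 0) ω ρ := by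
      refine zeroLink_congr ?_ ▸ hl
      simp [List.count_cons, Nat.even_add, hg]
    cases hs with
    | zero hc hτ => exact loop.append (.zero hc (ih hτ hl'))
    | plus hc hτ => exact loop.append (.plus hc (ih hτ hl'))
    | minus hc hτ => exact loop.append (.minus hc (ih hτ hl'))

end IsStroll

/-- If `τ ⪯ σ` then: (i) if `σ` and `τ` have the same parity of number of
zeros and `τ` is good, then `σ` is good; (ii) if the parities differ and `τ` is
reversing, then `σ` is good. -/
theorem good_of_precedes (σ τ : List (ZMod 3)) (h : Precedes τ σ) :
    (σ.count 0 % 2 = τ.count 0 % 2 → GoodSeq τ → GoodSeq σ) ∧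
      (σ.count 0 % 2 ≠ τ.count 0 % 2 → ReversingSeq τ → GoodSeq σ) := by
  constructor
  · intro hp hτ
    refine hτ.of_precedes h ?_
    have : Even (σ.count 0 + τ.count 0) := by rw [Nat.even_add, Nat.even_iff, Nat.even_iff, hp]
    simp [ZeroLink, this]
  · intro hp hτ
    refine hτ.of_precedes h ?_
    have : ¬ Even (σ.count 0 + τ.count 0) := by
      rw [Nat.even_add, Nat.even_iff, Nat.even_iff]; omega
    simp only [ZeroLink, this, if_false]
    exact ⟨by decide, by decide⟩
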